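/- arXiv:2003.13119 — 2 statements merged into one kernel-verified Lean document; each statement's English description precedes it below -/
import Mathlib

section
/- Let H : [0,1]^q → [0,1]^q be a C² map with components H_1,…,H_q such that for every j ≠ k and every l, both ∂²H_l/∂f_j∂f_k = 0 and (∂H_l/∂f_j)·(∂H_l/∂f_k) = 0 hold everywhere on the open cube, and suppose each H_l has a nonvanishing gradient at every point. Then each component H_l depends on at most one coordinate: there exists l' and a univariate function h_l such that H_l(f) = h_l(f_{l'}) for all f. -/
/-!
The sets `{f | ∂ⱼ H_l f ≠ 0}` are open in the open cube, pairwise disjoint because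
`∂ⱼ H_l · ∂ₖ H_l = 0`, and they cover it because the gradient never vanishes. The cube is
connected, so one of them, say for `j = l'`, is the whole cube and all other partials of `H_l`
vanish there. Since the cube is convex, `H_l` is then constant on each segment along which
`f_{l'}` is fixed, so `H_l f = H_l (c with c_{l'} := f_{l'})` for a fixed centre `c`.
-/

open Set

theorem IsPreconnected.forall_eq_zero_of_mul_eq_zero {X ι M : Type*} [TopologicalSpace X]
    [MulZeroClass M] [NoZeroDivisors M] [TopologicalSpace M] [T1Space M]
    {S : Set X} (hS : IsPreconnected S) (hSo : IsOpen S) {D : ι → X → M}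
    (hD : ∀ j, ContinuousOn (D j) S) (hmul : ∀ j k, j ≠ k → ∀ x ∈ S, D j x * D k x = 0)
    (hcover : ∀ x ∈ S, ∃ j, D j x ≠ 0) {x₀ : X} (hx₀ : x₀ ∈ S) {j₀ : ι} (h₀ : D j₀ x₀ ≠ 0) :
    ∀ x ∈ S, ∀ j ≠ j₀, D j x = 0 := by
  set U := fun j => S ∩ D j ⁻¹' {0}ᶜ
  have hU : ∀ j, IsOpen (U j) := fun j =>
    (hD j).isOpen_inter_preimage hSo isOpen_compl_singleton
  have hdisj : Disjoint (U j₀) (⋃ j ∈ ({j₀}ᶜ : Set ι), U j) := by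
    simp only [Set.disjoint_left, mem_iUnion, not_exists]
    rintro x ⟨hx, hx₀⟩ j hj ⟨-, hxj⟩
    exact mul_ne_zero hxj hx₀ (hmul j j₀ hj x hx)
  have hcover' : S ⊆ U j₀ ∪ ⋃ j ∈ ({j₀}ᶜ : Set ι), U j := by
    intro x hx
    obtain ⟨j, hj⟩ := hcover x hx
    rcases eq_or_ne j j₀ with rfl | hne
    · exact Or.inl ⟨hx, hj⟩
    · exact Or.inr (mem_biUnion hne ⟨hx, hj⟩)
  rcases hS.subset_or_subset (hU j₀) (isOpen_biUnion fun j _ => hU j) hdisj hcover' with h | h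
  · intro x hx j hj
    by_contra hxj
    exact Set.disjoint_left.1 hdisj (h hx) (mem_biUnion hj ⟨hx, hxj⟩)
  · exact absurd (h hx₀) (Set.disjoint_left.1 hdisj ⟨hx₀, h₀⟩)

theorem Convex.apply_eq_of_fderiv_apply_eq_zero {E F : Type*} [NormedAddCommGroup E]
    [NormedSpace ℝ E] [NormedAddCommGroup F] [NormedSpace ℝ F] {S : Set E} {g : E → F}
    (hS : Convex ℝ S) (hg : ∀ z ∈ S, DifferentiableAt ℝ g z) {x y : E} (hx : x ∈ S) (hy : y ∈ S)
    (h : ∀ z ∈ S, fderiv ℝ g z (y - x) = 0) : g y = g x := by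
  have hmem : ∀ t ∈ Icc (0 : ℝ) 1, AffineMap.lineMap x y t ∈ S := fun t ht =>
    hS.lineMap_mem hx hy ht
  have hderiv : ∀ t ∈ Icc (0 : ℝ) 1, HasDerivAt (g ∘ AffineMap.lineMap x y) 0 t := by
    intro t ht
    simpa [h _ (hmem t ht)] using
      (hg _ (hmem t ht)).hasFDerivAt.comp_hasDerivAt t AffineMap.hasDerivAt_lineMap
  simpa using constant_of_has_deriv_right_zero
    (fun t ht => (hderiv t ht).continuousAt.continuousWithinAt)
    (fun t ht => (hderiv t (Ico_subset_Icc_self ht)).hasDerivWithinAt) 1 (by simp)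

theorem ContinuousLinearMap.apply_eq_zero_of_apply_single_eq_zero {ι F : Type*} [Fintype ι]
    [DecidableEq ι] [NormedAddCommGroup F] [NormedSpace ℝ F] (L : (ι → ℝ) →L[ℝ] F) {j₀ : ι}
    (hL : ∀ j ≠ j₀, L (Pi.single j 1) = 0) {v : ι → ℝ} (hv : v j₀ = 0) : L v = 0 := by
  rw [← Finset.univ_sum_single v, map_sum]
  refine Finset.sum_eq_zero fun j _ => ?_
  rcases eq_or_ne j j₀ with rfl | hj
  · simp [hv]
  · rw [← mul_one (v j), ← smul_eq_mul, Pi.single_smul', map_smul, hL j hj, smul_zero]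

theorem Convex.apply_eq_of_fderiv_apply_single_eq_zero {ι F : Type*} [Fintype ι] [DecidableEq ι]
    [NormedAddCommGroup F] [NormedSpace ℝ F] {S : Set (ι → ℝ)} (hS : Convex ℝ S)
    {g : (ι → ℝ) → F} (hg : ∀ z ∈ S, DifferentiableAt ℝ g z) {j₀ : ι}
    (hpartial : ∀ z ∈ S, ∀ j ≠ j₀, fderiv ℝ g z (Pi.single j 1) = 0) {x y : ι → ℝ}
    (hx : x ∈ S) (hy : y ∈ S) (hxy : x j₀ = y j₀) : g x = g y :=
  hS.apply_eq_of_fderiv_apply_eq_zero hg hy hx fun z hz =>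
    (fderiv ℝ g z).apply_eq_zero_of_apply_single_eq_zero (hpartial z hz) (by simp [hxy])

theorem stmt2_general (q : ℕ) (H : (Fin q → ℝ) → (Fin q → ℝ))
    (S : Set (Fin q → ℝ)) (hS : S = {f | ∀ i, f i ∈ Ioo (0:ℝ) 1})
    (hreg : ∀ l, ContDiffOn ℝ 2 (fun f => H f l) S)
    (hprod : ∀ l, ∀ j k : Fin q, j ≠ k → ∀ f ∈ S,
      (fderiv ℝ (fun y => H y l) f (Pi.single j 1)) *
        (fderiv ℝ (fun y => H y l) f (Pi.single k 1)) = 0)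
    (hgrad : ∀ l, ∀ f ∈ S, ∃ j, fderiv ℝ (fun y => H y l) f (Pi.single j 1) ≠ 0) :
    ∀ l, ∃ (l' : Fin q) (h : ℝ → ℝ), ∀ f ∈ S, H f l = h (f l') := by
  intro l
  have hcube : S = univ.pi fun _ => Ioo (0 : ℝ) 1 := by rw [hS]; ext f; simp [mem_pi]
  have hSo : IsOpen S := hcube ▸ isOpen_set_pi finite_univ fun _ _ => isOpen_Ioo
  have hSc : Convex ℝ S := hcube ▸ convex_pi fun _ _ => convex_Ioo 0 1
  set c : Fin q → ℝ := fun _ => 1 / 2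
  have hc : c ∈ S := by rw [hcube]; intro i _; norm_num [c]
  have hdiff : ∀ f ∈ S, DifferentiableAt ℝ (fun y => H y l) f := fun f hf =>
    ((hreg l).differentiableOn (by norm_num)).differentiableAt (hSo.mem_nhds hf)
  have hcont : ∀ j, ContinuousOn (fun f => fderiv ℝ (fun y => H y l) f (Pi.single j 1)) S :=
    fun j => ((hreg l).continuousOn_fderiv_of_isOpen hSo (by norm_num)).clm_apply
      continuousOn_const
  obtain ⟨j₀, hj₀⟩ := hgrad l c hc
  have hpartial := hSc.isPreconnected.forall_eq_zero_of_mul_eq_zero hSo hcont (hprod l)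
    (hgrad l) hc hj₀
  refine ⟨j₀, fun t => H (Function.update c j₀ t) l, fun f hf => ?_⟩
  refine hSc.apply_eq_of_fderiv_apply_single_eq_zero hdiff hpartial hf ?_ (by simp)
  rw [hcube] at hf hc ⊢
  exact (update_mem_pi_iff_of_mem hc).2 fun _ => hf j₀ (mem_univ _)

/-- If `H : [0,1]^q → [0,1]^q` is `C²` on the open cube, and for every component `l`
and every pair `j ≠ k` the mixed second partial vanishes and the product of the two
first partials vanishes, while the gradient of each component never vanishes, then
each component depends on at most one coordinate. -/
theorem stmt2 (q : ℕ) (H : (Fin q → ℝ) → (Fin q → ℝ))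
    (S : Set (Fin q → ℝ)) (hS : S = {f | ∀ i, f i ∈ Ioo (0:ℝ) 1})
    (hreg : ∀ l, ContDiffOn ℝ 2 (fun f => H f l) S)
    (hmixed : ∀ l, ∀ j k : Fin q, j ≠ k → ∀ f ∈ S,
      fderiv ℝ (fun x => fderiv ℝ (fun y => H y l) x (Pi.single j 1)) f (Pi.single k 1) = 0)
    (hprod : ∀ l, ∀ j k : Fin q, j ≠ k → ∀ f ∈ S,
      (fderiv ℝ (fun y => H y l) f (Pi.single j 1)) *
        (fderiv ℝ (fun y => H y l) f (Pi.single k 1)) = 0)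
    (hgrad : ∀ l, ∀ f ∈ S, ∃ j, fderiv ℝ (fun y => H y l) f (Pi.single j 1) ≠ 0) :
    ∀ l, ∃ (l' : Fin q) (h : ℝ → ℝ), ∀ f ∈ S, H f l = h (f l') :=
  stmt2_general q H S hS hreg hprod hgrad
end

section
/- Let f_1^0,…,f_T^0 ∈ [0,1] be distinct and let M_T be their scaled empirical distribution function M_T(ξ) = (1/(T+1)) ∑_t 1{f_t^0 ≤ ξ}. Then min over sequences (f_1,…,f_T) in the sieve space 𝓕*_T of (1/T)∑_{t=1}^T (f_t − f_t^0)² is at most sup_{ξ∈[0,1]} |M_T(ξ) − ξ|². -/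
open Set Finset

/-- The best approximation in the sieve space `𝓕*_T` of a sequence of distinct points
of `[0,1]` is bounded by the squared sup-distance between the scaled empirical cdf
and the identity. -/
theorem stmt5 (T : ℕ) (hT : 1 ≤ T) (f0 : Fin T → ℝ) (hval : ∀ t, f0 t ∈ Icc (0:ℝ) 1)
    (hinj : Function.Injective f0)
    (M : ℝ → ℝ)
    (hM : ∀ ξ, M ξ = (1 / (T + 1 : ℝ)) * ∑ s : Fin T, if f0 s ≤ ξ then (1:ℝ) else 0) :
    ∃ σ : Equiv.Perm (Fin T),
      (1 / (T : ℝ)) * ∑ t : Fin T, (((σ t : ℕ) + 1 : ℝ) / (T + 1) - f0 t) ^ 2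
        ≤ ⨆ ξ : Icc (0:ℝ) 1, |M ξ - (ξ : ℝ)| ^ 2 := by
  classical
  have hcard : ∀ t : Fin T, ((Finset.univ.filter (fun s => f0 s < f0 t)).card) < T := by
    intro t
    have h1 : Finset.univ.filter (fun s => f0 s < f0 t) ⊆ Finset.univ.erase t := by
      intro s hs
      simp only [Finset.mem_filter, Finset.mem_univ, true_and] at hs
      exact Finset.mem_erase.2 ⟨fun h => absurd (h ▸ hs) (lt_irrefl _), Finset.mem_univ _⟩
    have h2 := Finset.card_le_card h1
    rw [Finset.card_erase_of_mem (Finset.mem_univ t), Finset.card_univ, Fintype.card_fin] at h2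
    omega
  set r : Fin T → Fin T := fun t => ⟨(Finset.univ.filter (fun s => f0 s < f0 t)).card, hcard t⟩
    with hr
  have hr_inj : Function.Injective r := by
    intro a b hab
    by_contra hne
    have hfne : f0 a ≠ f0 b := fun h => hne (hinj h)
    have key : ∀ a b : Fin T, f0 a < f0 b → (r a : ℕ) < (r b : ℕ) := by
      intro a b h
      have hsub : Finset.univ.filter (fun s => f0 s < f0 a)
          ⊆ Finset.univ.filter (fun s => f0 s < f0 b) := by
        intro s hs
        simp only [Finset.mem_filter, Finset.mem_univ, true_and] at *
        exact hs.trans h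
      have hmem : a ∈ Finset.univ.filter (fun s => f0 s < f0 b) := by simp [h]
      have hnot : a ∉ Finset.univ.filter (fun s => f0 s < f0 a) := by simp
      exact Finset.card_lt_card ((Finset.ssubset_iff_of_subset hsub).2 ⟨a, hmem, hnot⟩)
    have hv : (r a : ℕ) = (r b : ℕ) := by rw [hab]
    rcases hfne.lt_or_gt with h | h
    · exact absurd hv (Nat.ne_of_lt (key a b h))
    · exact absurd hv.symm (Nat.ne_of_lt (key b a h))
  let σ : Equiv.Perm (Fin T) := Equiv.ofBijective r (Finite.injective_iff_bijective.1 hr_inj)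
  have hfilter : ∀ t, (Finset.univ.filter (fun s => f0 s ≤ f0 t)).card
      = (Finset.univ.filter (fun s => f0 s < f0 t)).card + 1 := by
    intro t
    have heq : Finset.univ.filter (fun s => f0 s ≤ f0 t)
        = insert t (Finset.univ.filter (fun s => f0 s < f0 t)) := by
      ext s
      simp only [Finset.mem_filter, Finset.mem_univ, true_and, Finset.mem_insert]
      constructor
      · intro h
        rcases h.lt_or_eq with h' | h'
        · exact Or.inr h'
        · exact Or.inl (hinj h')
      · rintro (rfl | h')
        · exact le_rfl
        · exact h'.le
    rw [heq, Finset.card_insert_of_notMem (by simp)]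
  have hMt : ∀ t, M (f0 t) = ((r t : ℕ) + 1 : ℝ) / (T + 1) := by
    intro t
    rw [hM]
    have hs : (∑ s : Fin T, if f0 s ≤ f0 t then (1:ℝ) else 0)
        = ((Finset.univ.filter (fun s => f0 s ≤ f0 t)).card : ℝ) := by
      rw [Finset.sum_boole]
    rw [hs, hfilter t]
    have : ((r t : ℕ) : ℝ) = ((Finset.univ.filter (fun s => f0 s < f0 t)).card : ℝ) := by
      simp [hr]
    push_cast
    rw [this]
    ring
  set C := ⨆ ξ : Icc (0:ℝ) 1, |M ξ - (ξ : ℝ)| ^ 2 with hC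
  have hM01 : ∀ ξ : ℝ, 0 ≤ M ξ ∧ M ξ ≤ 1 := by
    intro ξ
    rw [hM]
    have h0 : (0:ℝ) ≤ ∑ s : Fin T, if f0 s ≤ ξ then (1:ℝ) else 0 :=
      Finset.sum_nonneg fun s _ => by split <;> norm_num
    have h1 : (∑ s : Fin T, if f0 s ≤ ξ then (1:ℝ) else 0) ≤ (T:ℝ) := by
      calc (∑ s : Fin T, if f0 s ≤ ξ then (1:ℝ) else 0)
          ≤ ∑ _s : Fin T, (1:ℝ) := Finset.sum_le_sum fun s _ => by split <;> norm_num
        _ = (T:ℝ) := by simp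
    constructor
    · positivity
    · have hT1 : (0:ℝ) < T + 1 := by positivity
      rw [div_mul_eq_mul_div, one_mul, div_le_one hT1]
      linarith
  have hbdd : BddAbove (Set.range fun ξ : Icc (0:ℝ) 1 => |M ξ - (ξ : ℝ)| ^ 2) := by
    refine ⟨1, ?_⟩
    rintro x ⟨ξ, rfl⟩
    have hξ := ξ.2
    obtain ⟨h0, h1⟩ := hM01 ξ
    have habs : |M ξ - (ξ:ℝ)| ≤ 1 := abs_le.2 ⟨by simp only [Set.mem_Icc] at hξ; linarith,
      by simp only [Set.mem_Icc] at hξ; linarith⟩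
    calc |M ξ - (ξ:ℝ)| ^ 2 ≤ 1 ^ 2 := pow_le_pow_left₀ (abs_nonneg _) habs 2
      _ = 1 := one_pow 2
  refine ⟨σ, ?_⟩
  have hterm : ∀ t, (((σ t : ℕ) + 1 : ℝ) / (T + 1) - f0 t) ^ 2 ≤ C := by
    intro t
    have hσ : ((σ t : ℕ) + 1 : ℝ) / (T + 1) = M (f0 t) := by
      rw [hMt t]; rfl
    rw [hσ]
    calc (M (f0 t) - f0 t) ^ 2 = |M (f0 t) - f0 t| ^ 2 := (sq_abs _).symm
      _ ≤ C := le_ciSup hbdd ⟨f0 t, hval t⟩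
  have hsum : (∑ t : Fin T, (((σ t : ℕ) + 1 : ℝ) / (T + 1) - f0 t) ^ 2) ≤ (T:ℝ) * C := by
    calc (∑ t : Fin T, (((σ t : ℕ) + 1 : ℝ) / (T + 1) - f0 t) ^ 2)
        ≤ ∑ _t : Fin T, C := Finset.sum_le_sum fun t _ => hterm t
      _ = (T:ℝ) * C := by simp [mul_comm]
  have hT0 : (0:ℝ) < T := by exact_mod_cast hT
  calc (1 / (T : ℝ)) * ∑ t : Fin T, (((σ t : ℕ) + 1 : ℝ) / (T + 1) - f0 t) ^ 2
      ≤ (1 / (T : ℝ)) * ((T:ℝ) * C) := by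
        apply mul_le_mul_of_nonneg_left hsum (by positivity)
    _ = C := by field_simp
end
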